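/- If 𝒰 is a Z_B-ultrafilter on X, then Z_B⁻¹[𝒰] = {f ∈ B₁(X) : Z(f) ∈ 𝒰} is a maximal ideal in B₁(X). -/

import Mathlib

open Filter Topology

/-- A function `f : X → ℝ` is Baire one if it is a pointwise limit of a
sequence of continuous functions. -/
def IsBaireOne {X : Type*} [TopologicalSpace X] (f : X → ℝ) : Prop :=
  ∃ F : ℕ → C(X, ℝ), ∀ x, Tendsto (fun n => F n x) atTop (𝓝 (f x))

/-- The ring `B₁(X)` of real valued Baire one functions on `X`, as a subring
of the ring of all functions `X → ℝ`. -/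
def B1 (X : Type*) [TopologicalSpace X] : Subring (X → ℝ) where
  carrier := {f | IsBaireOne f}
  zero_mem' := ⟨fun _ => 0, fun x => by simpa using tendsto_const_nhds⟩
  one_mem' := ⟨fun _ => 1, fun x => by simpa using tendsto_const_nhds⟩
  add_mem' := by
    rintro f g ⟨F, hF⟩ ⟨G, hG⟩
    exact ⟨fun n => F n + G n, fun x => by simpa using (hF x).add (hG x)⟩
  mul_mem' := by
    rintro f g ⟨F, hF⟩ ⟨G, hG⟩
    exact ⟨fun n => F n * G n, fun x => by simpa using (hF x).mul (hG x)⟩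
  neg_mem' := by
    rintro f ⟨F, hF⟩
    exact ⟨fun n => -F n, fun x => by simpa using (hF x).neg⟩

variable {X : Type*} [TopologicalSpace X]

/-- The constant function with value `r`, as an element of `B₁(X)`. -/
def bconst (X : Type*) [TopologicalSpace X] (r : ℝ) : B1 X :=
  ⟨fun _ => r, ⟨fun _ => ContinuousMap.const X r, fun x => by simpa using tendsto_const_nhds⟩⟩

theorem babs_mem (f : B1 X) : (fun x => |(f : X → ℝ) x|) ∈ B1 X := by
  obtain ⟨F, hF⟩ := f.2
  exact ⟨fun n => ⟨fun x => |F n x|, (F n).continuous.abs⟩, fun x => (hF x).abs⟩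

/-- The absolute value `|f|` of a Baire one function. -/
def babs (f : B1 X) : B1 X := ⟨fun x => |(f : X → ℝ) x|, babs_mem f⟩

/-- The zero set `Z(f)` of `f ∈ B₁(X)`. -/
def zset (f : B1 X) : Set X := {x | (f : X → ℝ) x = 0}

/-- `Z(B₁(X))`, the family of all zero sets of Baire one functions on `X`. -/
def zsets (X : Type*) [TopologicalSpace X] : Set (Set X) := {Z | ∃ f : B1 X, zset f = Z}

/-- `Z_B[I] = {Z(f) : f ∈ I}` for an ideal `I` of `B₁(X)`. -/
def zbi (I : Ideal (B1 X)) : Set (Set X) := {Z | ∃ f ∈ I, zset f = Z}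

/-- A `Z_B`-filter on `X`: a nonempty family of zero sets of Baire one functions,
not containing `∅`, closed under finite intersections and upward closed in `Z(B₁(X))`. -/
def IsZBFilter (F : Set (Set X)) : Prop :=
  F.Nonempty ∧ F ⊆ zsets X ∧ ∅ ∉ F ∧
    (∀ Z₁ ∈ F, ∀ Z₂ ∈ F, Z₁ ∩ Z₂ ∈ F) ∧
    (∀ Z ∈ F, ∀ Z' ∈ zsets X, Z ⊆ Z' → Z' ∈ F)

/-- A `Z_B`-ultrafilter on `X`: a maximal `Z_B`-filter. -/
def IsZBUltrafilter (U : Set (Set X)) : Prop :=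
  IsZBFilter U ∧ ∀ F : Set (Set X), IsZBFilter F → U ⊆ F → F = U

/-- The finite intersection property: every nonempty finite subfamily has
nonempty intersection. -/
def FIP {X : Type*} (B : Set (Set X)) : Prop :=
  ∀ S : Finset (Set X), ↑S ⊆ B → S.Nonempty → (⋂₀ (S : Set (Set X))).Nonempty

/-- An ideal `I` of `B₁(X)` is a `Z_B`-ideal if `Z_B⁻¹[Z_B[I]] = I`. -/
def IsZBIdeal (I : Ideal (B1 X)) : Prop :=
  ∀ f : B1 X, zset f ∈ zbi I → f ∈ I

/-- An ideal of `B₁(X)` is fixed if the zero sets of its members have a common point. -/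
def FixedIdeal (I : Ideal (B1 X)) : Prop :=
  (⋂ f ∈ (I : Set (B1 X)), zset f).Nonempty

/-- A prime `Z_B`-filter. -/
def IsPrimeZBFilter (F : Set (Set X)) : Prop :=
  IsZBFilter F ∧ ∀ Z₁ ∈ zsets X, ∀ Z₂ ∈ zsets X, Z₁ ∪ Z₂ ∈ F → Z₁ ∈ F ∨ Z₂ ∈ F

/-- `M(f) ≥ 0` in the quotient `B₁(X)/M`: the coset contains a nonnegative function. -/
def QNonneg (M : Ideal (B1 X)) (a : B1 X ⧸ M) : Prop :=
  ∃ g : B1 X, (∀ x, 0 ≤ (g : X → ℝ) x) ∧ Ideal.Quotient.mk M g = a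

/-- `M(f) > 0` in the quotient `B₁(X)/M`. -/
def QPos (M : Ideal (B1 X)) (a : B1 X ⧸ M) : Prop := QNonneg M a ∧ a ≠ 0

/-- A maximal ideal `M` of `B₁(X)` is real if the canonical copy of `ℝ`
(via constant functions) is all of `B₁(X)/M`. -/
def RealIdeal (M : Ideal (B1 X)) : Prop :=
  Function.Surjective (fun r : ℝ => Ideal.Quotient.mk M (bconst X r))

/-- An `F_σ` subset: a countable union of closed sets. -/
def IsFSigma {X : Type*} [TopologicalSpace X] (s : Set X) : Prop :=
  ∃ F : ℕ → Set X, (∀ n, IsClosed (F n)) ∧ s = ⋃ n, F n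

/-!
`Z_B⁻¹[𝒰]` is an ideal because `Z(f + g) ⊇ Z(f) ∩ Z(g)` and `Z(hf) ⊇ Z(f)`. If `f ∉ Z_B⁻¹[𝒰]`,
then `Z(f)` misses some `Z(g) ∈ 𝒰`, for otherwise `Z(f)` together with `𝒰` would generate a
strictly larger `Z_B`-filter. Then `f² + g²` vanishes nowhere, so it is a unit of `B₁(X)`
(the reciprocal of a nowhere zero Baire one function is Baire one), and any ideal containing
`Z_B⁻¹[𝒰]` and `f` contains it.
-/

theorem IsBaireOne.inv {f : X → ℝ} (hf : IsBaireOne f) (hf₀ : ∀ x, f x ≠ 0) :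
    IsBaireOne f⁻¹ := by
  obtain ⟨F, hF⟩ := hf
  -- `a / (a ^ 2 + ε)` is continuous in `a` for `ε > 0` and tends to `a⁻¹` as `ε → 0` when `a ≠ 0`.
  refine ⟨fun n => ⟨fun x => F n x / (F n x ^ 2 + 1 / ((n : ℝ) + 1)), ?_⟩, fun x => ?_⟩
  · exact (F n).continuous.div (((F n).continuous.pow 2).add continuous_const)
      fun x => (by positivity : (0 : ℝ) < F n x ^ 2 + 1 / ((n : ℝ) + 1)).ne'
  · have hden := ((hF x).pow 2).add tendsto_one_div_add_atTop_nhds_zero_nat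
    have hlim := (hF x).div hden (by simpa using hf₀ x)
    rw [add_zero, sq, div_mul_cancel_left₀ (hf₀ x)] at hlim
    exact hlim

@[simp]
theorem mem_zset {f : B1 X} {x : X} : x ∈ zset f ↔ (f : X → ℝ) x = 0 := Iff.rfl

theorem zset_mem_zsets (f : B1 X) : zset f ∈ zsets X := ⟨f, rfl⟩

@[simp]
theorem zset_zero : zset (0 : B1 X) = Set.univ := by
  ext; simp

@[simp]
theorem zset_one : zset (1 : B1 X) = ∅ := by
  ext; simp

theorem zset_inter_subset_zset_add (f g : B1 X) : zset f ∩ zset g ⊆ zset (f + g) := by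
  rintro x ⟨hf, hg⟩
  simp_all

theorem zset_subset_zset_mul_left (c f : B1 X) : zset f ⊆ zset (c * f) := by
  intro x hf
  simp_all

theorem zset_mul_self_add_mul_self (f g : B1 X) :
    zset (f * f + g * g) = zset f ∩ zset g := by
  ext x
  simp only [mem_zset, Subring.coe_add, Subring.coe_mul, Pi.add_apply, Pi.mul_apply,
    Set.mem_inter_iff]
  rw [add_eq_zero_iff_of_nonneg (mul_self_nonneg _) (mul_self_nonneg _), mul_self_eq_zero,
    mul_self_eq_zero]

theorem isUnit_of_zset_eq_empty {f : B1 X} (hf : zset f = ∅) : IsUnit f := by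
  have hf₀ : ∀ x, (f : X → ℝ) x ≠ 0 := fun x hx => (hf ▸ mem_zset.2 hx : x ∈ (∅ : Set X))
  refine isUnit_iff_exists_inv.2 ⟨⟨_, f.2.inv hf₀⟩, Subtype.ext ?_⟩
  funext x
  exact mul_inv_cancel₀ (hf₀ x)

theorem IsZBFilter.univ_mem {F : Set (Set X)} (hF : IsZBFilter F) : Set.univ ∈ F := by
  obtain ⟨Z, hZ⟩ := hF.1
  exact hF.2.2.2.2 Z hZ _ ⟨0, zset_zero⟩ (Set.subset_univ Z)

/-- `Z_B⁻¹[F] = {f ∈ B₁(X) : Z(f) ∈ F}`. -/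
def IsZBFilter.zbInv {F : Set (Set X)} (hF : IsZBFilter F) : Ideal (B1 X) where
  carrier := {f | zset f ∈ F}
  zero_mem' := by simpa using hF.univ_mem
  add_mem' {f g} hf hg :=
    hF.2.2.2.2 _ (hF.2.2.2.1 _ hf _ hg) _ (zset_mem_zsets _) (zset_inter_subset_zset_add f g)
  smul_mem' c f hf := hF.2.2.2.2 _ hf _ (zset_mem_zsets _) (zset_subset_zset_mul_left c f)

theorem IsZBFilter.mem_zbInv {F : Set (Set X)} (hF : IsZBFilter F) {f : B1 X} :
    f ∈ hF.zbInv ↔ zset f ∈ F := Iff.rfl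

/-- The `Z_B`-filter generated by `F ∪ {Z}`, when `Z` meets every member of `F`. -/
def zbFilterAdjoin (F : Set (Set X)) (Z : Set X) : Set (Set X) :=
  {V | V ∈ zsets X ∧ ∃ W ∈ F, Z ∩ W ⊆ V}

theorem IsZBFilter.isZBFilter_zbFilterAdjoin {F : Set (Set X)} (hF : IsZBFilter F)
    {Z : Set X} (hZ : Z ∈ zsets X) (hmeet : ∀ W ∈ F, (Z ∩ W).Nonempty) :
    IsZBFilter (zbFilterAdjoin F Z) := by
  refine ⟨⟨Z, hZ, Set.univ, hF.univ_mem, Set.inter_subset_left⟩, fun V hV => hV.1, ?_, ?_, ?_⟩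
  · rintro ⟨-, W, hW, hsub⟩
    exact Set.not_nonempty_empty (Set.subset_empty_iff.1 hsub ▸ hmeet W hW)
  · rintro V₁ ⟨⟨f₁, rfl⟩, W₁, hW₁, hs₁⟩ V₂ ⟨⟨f₂, rfl⟩, W₂, hW₂, hs₂⟩
    refine ⟨⟨f₁ * f₁ + f₂ * f₂, zset_mul_self_add_mul_self f₁ f₂⟩,
      W₁ ∩ W₂, hF.2.2.2.1 W₁ hW₁ W₂ hW₂, fun x hx => ⟨hs₁ ⟨hx.1, hx.2.1⟩, hs₂ ⟨hx.1, hx.2.2⟩⟩⟩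
  · rintro V ⟨-, W, hW, hsub⟩ V' hV' hVV'
    exact ⟨hV', W, hW, hsub.trans hVV'⟩

theorem IsZBUltrafilter.exists_inter_eq_empty {U : Set (Set X)} (hU : IsZBUltrafilter U)
    {Z : Set X} (hZ : Z ∈ zsets X) (hZU : Z ∉ U) : ∃ W ∈ U, Z ∩ W = ∅ := by
  by_contra! hmeet
  have hsub : U ⊆ zbFilterAdjoin U Z := fun W hW => ⟨hU.1.2.1 hW, W, hW, Set.inter_subset_right⟩
  have hZmem : Z ∈ zbFilterAdjoin U Z := ⟨hZ, Set.univ, hU.1.univ_mem, Set.inter_subset_left⟩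
  exact hZU (hU.2 _ (hU.1.isZBFilter_zbFilterAdjoin hZ hmeet) hsub ▸ hZmem)

theorem IsZBUltrafilter.isMaximal_zbInv {U : Set (Set X)} (hU : IsZBUltrafilter U) :
    hU.1.zbInv.IsMaximal := by
  refine Ideal.isMaximal_iff.2 ⟨by simpa [IsZBFilter.mem_zbInv] using hU.1.2.2.1, ?_⟩
  intro J f hUJ hfU hfJ
  obtain ⟨W, hWU, hfW⟩ := hU.exists_inter_eq_empty (zset_mem_zsets f) hfU
  obtain ⟨g, rfl⟩ := hU.1.2.1 hWU
  have hunit : IsUnit (f * f + g * g) :=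
    isUnit_of_zset_eq_empty ((zset_mul_self_add_mul_self f g).trans hfW)
  have hmem : f * f + g * g ∈ J := J.add_mem (J.mul_mem_left f hfJ) (J.mul_mem_left g (hUJ hWU))
  exact J.eq_top_iff_one.1 (J.eq_top_of_isUnit_mem hmem hunit)

/-- If `𝒰` is a `Z_B`-ultrafilter on `X` then `Z_B⁻¹[𝒰]` is a maximal ideal. -/
theorem zbinv_isMaximal {X : Type*} [TopologicalSpace X]
    (U : Set (Set X)) (hU : IsZBUltrafilter U) :
    ∃ M : Ideal (B1 X), M.IsMaximal ∧ (M : Set (B1 X)) = {f : B1 X | zset f ∈ U} :=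
  ⟨hU.1.zbInv, hU.isMaximal_zbInv, rfl⟩
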